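/- arXiv:2202.08489 — 8 statements merged into one kernel-verified Lean document; each statement's English description precedes it below -/
import Mathlib

section
/- Let A and Ã be positive semidefinite n×n real matrices and let ε ∈ (0,1). If Ã ≈_ε A (i.e., e^{-ε}·xᵀAx ≤ xᵀÃx ≤ e^{ε}·xᵀAx for all x ∈ ℝⁿ), then the Hadamard squares satisfy Ã^{∘2} ≈_{2ε} A^{∘2}, i.e., e^{-2ε}·xᵀ(A∘A)x ≤ xᵀ(Ã∘Ã)x ≤ e^{2ε}·xᵀ(A∘A)x for all x ∈ ℝⁿ. -/
open Matrix

/-!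
In the Loewner order, `0 ≤ B ≤ A` implies `B ⊙ B ≤ A ⊙ A`, because
`A ⊙ A - B ⊙ B = (A - B) ⊙ A + B ⊙ (A - B)` is a sum of Hadamard products of positive
semidefinite matrices, which are positive semidefinite by the Schur product theorem.
The hypothesis says `e^{-ε} A ≤ Ã ≤ e^ε A`, and squaring both comparisons gives
`e^{-2ε} (A ⊙ A) ≤ Ã ⊙ Ã ≤ e^{2ε} (A ⊙ A)`.
-/

open scoped MatrixOrder ComplexOrder

namespace Matrix

theorem hadamard_self_le_hadamard_self {𝕜 ι : Type*} [RCLike 𝕜] {A B : Matrix ι ι 𝕜}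
    (hB : 0 ≤ B) (hBA : B ≤ A) : B ⊙ B ≤ A ⊙ A := by
  have hAB : (A - B).PosSemidef := le_iff.1 hBA
  have hA : A.PosSemidef := by simpa using hAB.add hB.posSemidef
  have split : A ⊙ A - B ⊙ B = (A - B) ⊙ A + B ⊙ (A - B) := by
    ext i j
    simp only [sub_apply, add_apply, hadamard_apply]
    ring
  rw [le_iff, split]
  exact (hAB.hadamard hA).add (hB.posSemidef.hadamard hAB)

section Real

variable {ι : Type*} [Fintype ι] {A B : Matrix ι ι ℝ}

theorem dotProduct_mulVec_le_of_le (h : A ≤ B) (x : ι → ℝ) :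
    x ⬝ᵥ A *ᵥ x ≤ x ⬝ᵥ B *ᵥ x := by
  simpa [sub_mulVec] using (le_iff.1 h).dotProduct_mulVec_nonneg x

theorem le_of_forall_dotProduct_mulVec_le (hA : A.IsHermitian) (hB : B.IsHermitian)
    (h : ∀ x, x ⬝ᵥ A *ᵥ x ≤ x ⬝ᵥ B *ᵥ x) : A ≤ B :=
  PosSemidef.of_dotProduct_mulVec_nonneg (hB.sub hA) fun x => by
    simpa [sub_mulVec] using h x

end Real

end Matrix

theorem stmt_0_general {n : ℕ} (A At : Matrix (Fin n) (Fin n) ℝ) (ε : ℝ)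
    (hA : A.PosSemidef) (hAt : At.PosSemidef)
    (happrox : ∀ x : Fin n → ℝ,
      Real.exp (-ε) * (x ⬝ᵥ A.mulVec x) ≤ x ⬝ᵥ At.mulVec x ∧
      x ⬝ᵥ At.mulVec x ≤ Real.exp ε * (x ⬝ᵥ A.mulVec x)) :
    ∀ x : Fin n → ℝ,
      Real.exp (-(2*ε)) * (x ⬝ᵥ (A ⊙ A).mulVec x) ≤ x ⬝ᵥ (At ⊙ At).mulVec x ∧
      x ⬝ᵥ (At ⊙ At).mulVec x ≤ Real.exp (2*ε) * (x ⬝ᵥ (A ⊙ A).mulVec x) := by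
  have hsmul (c : ℝ) : (c • A).IsHermitian := hA.isHermitian.smul (IsSelfAdjoint.all c)
  have hlower : Real.exp (-ε) • A ≤ At :=
    le_of_forall_dotProduct_mulVec_le (hsmul _) hAt.isHermitian fun x => by
      simpa [smul_mulVec] using (happrox x).1
  have hupper : At ≤ Real.exp ε • A :=
    le_of_forall_dotProduct_mulVec_le hAt.isHermitian (hsmul _) fun x => by
      simpa [smul_mulVec] using (happrox x).2
  have hlower2 := hadamard_self_le_hadamard_self (hA.smul (Real.exp_pos (-ε)).le).nonneg hlower
  have hupper2 := hadamard_self_le_hadamard_self hAt.nonneg hupper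
  have hsq (c : ℝ) : (c • A) ⊙ (c • A) = (c * c) • (A ⊙ A) := by
    rw [smul_hadamard, hadamard_smul, smul_smul]
  rw [hsq, ← Real.exp_add] at hlower2 hupper2
  intro x
  constructor
  · simpa [smul_mulVec, two_mul] using dotProduct_mulVec_le_of_le hlower2 x
  · simpa [smul_mulVec, two_mul] using dotProduct_mulVec_le_of_le hupper2 x

theorem stmt_0 {n : ℕ} (A At : Matrix (Fin n) (Fin n) ℝ) (ε : ℝ)
    (hA : A.PosSemidef) (hAt : At.PosSemidef) (hε : ε ∈ Set.Ioo (0:ℝ) 1)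
    (happrox : ∀ x : Fin n → ℝ,
      Real.exp (-ε) * (x ⬝ᵥ A.mulVec x) ≤ x ⬝ᵥ At.mulVec x ∧
      x ⬝ᵥ At.mulVec x ≤ Real.exp ε * (x ⬝ᵥ A.mulVec x)) :
    ∀ x : Fin n → ℝ,
      Real.exp (-(2*ε)) * (x ⬝ᵥ (A ⊙ A).mulVec x) ≤ x ⬝ᵥ (At ⊙ At).mulVec x ∧
      x ⬝ᵥ (At ⊙ At).mulVec x ≤ Real.exp (2*ε) * (x ⬝ᵥ (A ⊙ A).mulVec x) :=
  stmt_0_general A At ε hA hAt happrox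
end

section
/- Let M ∈ ℝ^{n×n} and let W₁, W₂ ∈ ℝ^{n×r} have columns u₁,…,u_r and v₁,…,v_r respectively. Then (M + W₁W₂ᵀ)^{∘2} = M^{∘2} + Σ_{i=1}^{r} diag(u_i)·(2M + W₁W₂ᵀ)·diag(v_i). -/
open Matrix

theorem Matrix.sum_diagonal_mul_mul_diagonal_eq_hadamard {m p n R : Type*} [Fintype m]
    [Fintype p] [Fintype n] [DecidableEq m] [DecidableEq p] [CommSemiring R]
    (A : Matrix m p R) (U : Matrix m n R) (V : Matrix p n R) :
    ∑ i, diagonal (fun j => U j i) * A * diagonal (fun k => V k i) = A ⊙ (U * Vᵀ) := by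
  ext j k
  simp only [Matrix.sum_apply, mul_diagonal, diagonal_mul]
  simp only [hadamard_apply, mul_apply, transpose_apply, Finset.mul_sum]
  exact Finset.sum_congr rfl fun i _ => by ring

theorem Matrix.add_hadamard_add_self {m p R : Type*} [CommSemiring R] (A B : Matrix m p R) :
    (A + B) ⊙ (A + B) = A ⊙ A + ((2 : R) • A + B) ⊙ B := by
  ext j k
  simp only [hadamard_apply, Matrix.add_apply, Matrix.smul_apply, smul_eq_mul]
  ring

theorem stmt_2 {n r : ℕ} (M : Matrix (Fin n) (Fin n) ℝ) (W₁ W₂ : Matrix (Fin n) (Fin r) ℝ) :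
    (M + W₁ * W₂ᵀ) ⊙ (M + W₁ * W₂ᵀ) =
      M ⊙ M + ∑ i : Fin r,
        Matrix.diagonal (fun j => W₁ j i) * ((2:ℝ) • M + W₁ * W₂ᵀ) *
          Matrix.diagonal (fun j => W₂ j i) := by
  rw [sum_diagonal_mul_mul_diagonal_eq_hadamard, add_hadamard_add_self]
end

section
/- Let A ∈ ℝ^{m×U}, c ∈ ℝ^{U}, P ∈ ℝ^{U×L}, y ∈ ℝᵐ and δ_y ∈ ℝᵐ. Set s = c − Aᵀy, s^{new} = c − Aᵀ(y + δ_y), S = Pᵀdiag(s)P and S^{new} = Pᵀdiag(s^{new})P, and H = A·(P S⁻¹ Pᵀ)^{∘2}·Aᵀ. If S is positive definite and S^{new} is positive semidefinite, then ‖S^{-1/2}·S^{new}·S^{-1/2} − I‖_F² = δ_yᵀ H δ_y, i.e., the Frobenius norm of S^{-1/2}S^{new}S^{-1/2} − I equals the local norm ‖δ_y‖_{H}. -/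
/-!
Write `Q = S^{1/2}` and `d = Aᵀ δ_y`. Then `S^{new} = S - Pᵀ diag(d) P`, so the whitened matrix
`Q⁻¹ S^{new} Q⁻¹ - I` is `-Y` with `Y = Q⁻¹ Pᵀ diag(d) P Q⁻¹` symmetric, and its squared
Frobenius norm is `tr (Y Y)`. Since `Q⁻¹ Q⁻¹ = S⁻¹`, cycling the trace turns this into
`tr (diag(d) M diag(d) M)` with `M = P S⁻¹ Pᵀ`, and for symmetric `M` that is `dᵀ (M ∘ M) d`,
i.e. `δ_yᵀ H δ_y`.
-/

open Matrix

/-- The positive semidefinite square root of a positive semidefinite matrix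
(Mathlib's December 2024 definition, since removed). -/
noncomputable def Matrix.PosSemidef.sqrt {n 𝕜 : Type*} [Fintype n] [DecidableEq n] [RCLike 𝕜]
    [PartialOrder 𝕜]
    {A : Matrix n n 𝕜} (hA : A.PosSemidef) : Matrix n n 𝕜 :=
  hA.1.eigenvectorUnitary.1 * diagonal ((↑) ∘ (√·) ∘ hA.1.eigenvalues) *
  (star hA.1.eigenvectorUnitary : Matrix n n 𝕜)

namespace Matrix

variable {n : Type*} [Fintype n]

theorem PosSemidef.isHermitian_sqrt [DecidableEq n] {𝕜 : Type*} [RCLike 𝕜] [PartialOrder 𝕜]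
    {A : Matrix n n 𝕜} (hA : A.PosSemidef) : hA.sqrt.IsHermitian := by
  rw [PosSemidef.sqrt, star_eq_conjTranspose]
  refine isHermitian_mul_mul_conjTranspose _ ?_
  exact isHermitian_diagonal_of_self_adjoint _ (funext fun i ↦ by simp)

theorem PosSemidef.sqrt_mul_self [DecidableEq n] {A : Matrix n n ℝ} (hA : A.PosSemidef) :
    hA.sqrt * hA.sqrt = A := by
  set U : Matrix n n ℝ := hA.1.eigenvectorUnitary.1
  set D : Matrix n n ℝ := diagonal ((↑) ∘ (√·) ∘ hA.1.eigenvalues)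
  have hU : star U * U = 1 := Unitary.star_mul_self_of_mem hA.1.eigenvectorUnitary.2
  have hD : D * D = diagonal (RCLike.ofReal ∘ hA.1.eigenvalues) := by
    simp [D, diagonal_mul_diagonal, Real.mul_self_sqrt (hA.eigenvalues_nonneg _)]
  conv_rhs => rw [hA.1.spectral_theorem, Unitary.conjStarAlgAut_apply, ← hD]
  calc hA.sqrt * hA.sqrt = U * D * (star U * U) * D * star U := by
        simp only [PosSemidef.sqrt, Matrix.mul_assoc]; rfl
    _ = _ := by rw [hU, Matrix.mul_one, Matrix.mul_assoc U D D]

section CommRing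

variable {m α : Type*} [CommRing α]

theorem sum_sum_sq_eq_trace_mul_transpose [Fintype m] (X : Matrix m n α) :
    ∑ i, ∑ j, X i j ^ 2 = trace (X * Xᵀ) := by
  simp only [sq, ← hadamard_apply, sum_hadamard_eq]

theorem IsSymm.mul_mul_transpose {A : Matrix n n α} (hA : A.IsSymm) (B : Matrix m n α) :
    (B * A * Bᵀ).IsSymm := by
  rw [IsSymm, transpose_mul, transpose_mul, transpose_transpose, hA.eq, Matrix.mul_assoc]

theorem dotProduct_mul_mul_transpose_mulVec [Fintype m] (A : Matrix m n α) (K : Matrix n n α)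
    (v : m → α) :
    v ⬝ᵥ (A * K * Aᵀ) *ᵥ v = (Aᵀ *ᵥ v) ⬝ᵥ K *ᵥ (Aᵀ *ᵥ v) := by
  rw [← mulVec_mulVec, ← mulVec_mulVec, dotProduct_mulVec, ← mulVec_transpose]

theorem dotProduct_hadamard_self_mulVec [DecidableEq n] {M : Matrix n n α} (hM : M.IsSymm)
    (d : n → α) :
    d ⬝ᵥ (M ⊙ M) *ᵥ d = trace (diagonal d * M * (diagonal d * M)) := by
  rw [dotProduct_mulVec, dotProduct_vecMul_hadamard, transpose_mul, diagonal_transpose, hM.eq]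

theorem trace_conj_mul_self [Fintype m] {R T : Matrix n n α} (hRT : R * R = T) (B : Matrix n m α)
    (D : Matrix m m α) (P : Matrix m n α) :
    trace (R * (B * D * P) * R * (R * (B * D * P) * R)) =
      trace (D * (P * T * B) * (D * (P * T * B))) := by
  calc _ = trace (B * D * P * (R * R) * (B * D * P) * (R * R)) := by
        simp only [Matrix.mul_assoc]; rw [trace_mul_comm R]; simp only [Matrix.mul_assoc]
    _ = trace (D * (P * T * B) * (D * (P * T * B))) := by
        simp only [hRT, Matrix.mul_assoc]; rw [trace_mul_comm B]; simp only [Matrix.mul_assoc]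

theorem inv_mul_sub_mul_inv_sub_one [DecidableEq n] {Q S : Matrix n n α} (hQS : Q * Q = S)
    (hQ : IsUnit Q.det) (N : Matrix n n α) : Q⁻¹ * (S - N) * Q⁻¹ - 1 = -(Q⁻¹ * N * Q⁻¹) := by
  rw [← hQS, Matrix.mul_sub, Matrix.sub_mul, ← Matrix.mul_assoc, Matrix.mul_assoc _ Q Q⁻¹,
    mul_nonsing_inv Q hQ, Matrix.mul_one, nonsing_inv_mul Q hQ]
  abel

end CommRing

end Matrix

theorem stmt_4_general {m U L : ℕ}
    (A : Matrix (Fin m) (Fin U) ℝ) (c : Fin U → ℝ) (P : Matrix (Fin U) (Fin L) ℝ)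
    (y δy : Fin m → ℝ) (s snew : Fin U → ℝ)
    (hs : s = c - Aᵀ.mulVec y) (hsnew : snew = c - Aᵀ.mulVec (y + δy))
    (S Snew : Matrix (Fin L) (Fin L) ℝ)
    (hS : S = Pᵀ * Matrix.diagonal s * P)
    (hSnew : Snew = Pᵀ * Matrix.diagonal snew * P)
    (H : Matrix (Fin m) (Fin m) ℝ)
    (hH : H = A * ((P * S⁻¹ * Pᵀ) ⊙ (P * S⁻¹ * Pᵀ)) * Aᵀ)
    (hSpd : S.PosDef) :
    ∑ i, ∑ j, (((hSpd.posSemidef.sqrt)⁻¹ * Snew * (hSpd.posSemidef.sqrt)⁻¹ - 1) i j) ^ 2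
      = δy ⬝ᵥ H.mulVec δy := by
  set Q := hSpd.posSemidef.sqrt
  set N := Pᵀ * diagonal (Aᵀ *ᵥ δy) * P with hN
  have hQS : Q * Q = S := hSpd.posSemidef.sqrt_mul_self
  have hQ : IsUnit Q.det := isUnit_of_mul_isUnit_left <| by
    rw [← det_mul, hQS]; exact (isUnit_iff_isUnit_det S).mp hSpd.isUnit
  have hSnew_eq : Snew = S - N := by
    rw [hSnew, hS, hN, ← Matrix.sub_mul, ← Matrix.mul_sub, diagonal_sub, hsnew, hs, mulVec_add,
      sub_add_eq_sub_sub]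
    rfl
  have hQinv : Q⁻¹.IsSymm :=
    (isHermitian_iff_isSymm.mp hSpd.posSemidef.isHermitian_sqrt).inv
  have hY : (Q⁻¹ * N * Q⁻¹).IsSymm := by
    simpa only [transpose_transpose, hQinv.eq] using
      ((isSymm_diagonal _).mul_mul_transpose Pᵀ).mul_mul_transpose Q⁻¹
  have hM : (P * S⁻¹ * Pᵀ).IsSymm :=
    (isHermitian_iff_isSymm.mp hSpd.isHermitian).inv.mul_mul_transpose P
  rw [sum_sum_sq_eq_trace_mul_transpose, hSnew_eq, inv_mul_sub_mul_inv_sub_one hQS hQ,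
    transpose_neg, hY.eq, neg_mul_neg, hH, dotProduct_mul_mul_transpose_mulVec,
    dotProduct_hadamard_self_mulVec hM, ← trace_conj_mul_self (by rw [← hQS, Matrix.mul_inv_rev])]

theorem stmt_4 {m U L : ℕ}
    (A : Matrix (Fin m) (Fin U) ℝ) (c : Fin U → ℝ) (P : Matrix (Fin U) (Fin L) ℝ)
    (y δy : Fin m → ℝ) (s snew : Fin U → ℝ)
    (hs : s = c - Aᵀ.mulVec y) (hsnew : snew = c - Aᵀ.mulVec (y + δy))
    (S Snew : Matrix (Fin L) (Fin L) ℝ)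
    (hS : S = Pᵀ * Matrix.diagonal s * P)
    (hSnew : Snew = Pᵀ * Matrix.diagonal snew * P)
    (H : Matrix (Fin m) (Fin m) ℝ)
    (hH : H = A * ((P * S⁻¹ * Pᵀ) ⊙ (P * S⁻¹ * Pᵀ)) * Aᵀ)
    (hSpd : S.PosDef) (hSnewpsd : Snew.PosSemidef) :
    ∑ i, ∑ j, (((hSpd.posSemidef.sqrt)⁻¹ * Snew * (hSpd.posSemidef.sqrt)⁻¹ - 1) i j) ^ 2
      = δy ⬝ᵥ H.mulVec δy :=
  stmt_4_general A c P y δy s snew hs hsnew S Snew hS hSnew H hH hSpd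
end

section
/- Let A ∈ ℝ^{m×U}, c ∈ ℝ^{U}, y, δ_y ∈ ℝᵐ, and set s = c − Aᵀy and s^{new} = c − Aᵀ(y + δ_y). For i = 1,…,k let P_i ∈ ℝ^{U×L_i} and f_i ∈ ℝ^{U}, and set S_i = P_iᵀdiag(f_i∘s)P_i, S_i^{new} = P_iᵀdiag(f_i∘s^{new})P_i, M_i = P_i S_i⁻¹ P_iᵀ, and H = Σ_{i=1}^{k} A((f_i f_iᵀ) ∘ M_i^{∘2})Aᵀ. Let S̄ = diag(S₁,…,S_k) and S̄^{new} = diag(S₁^{new},…,S_k^{new}) be the corresponding block diagonal matrices. If each S_i is positive definite and each S_i^{new} is positive semidefinite, then ‖S̄^{-1/2}·S̄^{new}·S̄^{-1/2} − I‖_F² = δ_yᵀ H δ_y. -/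
open Matrix

theorem stmt_6 {m U k : ℕ} (L : Fin k → ℕ)
    (A : Matrix (Fin m) (Fin U) ℝ) (c : Fin U → ℝ)
    (y δy : Fin m → ℝ) (s snew : Fin U → ℝ)
    (hs : s = c - Aᵀ.mulVec y) (hsnew : snew = c - Aᵀ.mulVec (y + δy))
    (P : ∀ i, Matrix (Fin U) (Fin (L i)) ℝ) (f : Fin k → Fin U → ℝ)
    (S Snew : ∀ i, Matrix (Fin (L i)) (Fin (L i)) ℝ)
    (hS : ∀ i, S i = (P i)ᵀ * Matrix.diagonal (f i * s) * P i)
    (hSnew : ∀ i, Snew i = (P i)ᵀ * Matrix.diagonal (f i * snew) * P i)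
    (M : Fin k → Matrix (Fin U) (Fin U) ℝ)
    (hM : ∀ i, M i = P i * (S i)⁻¹ * (P i)ᵀ)
    (H : Matrix (Fin m) (Fin m) ℝ)
    (hH : H = ∑ i, A * ((Matrix.vecMulVec (f i) (f i)) ⊙ (M i ⊙ M i)) * Aᵀ)
    (hSpd : ∀ i, (S i).PosDef) (hSnewpsd : ∀ i, (Snew i).PosSemidef) :
    ∀ R : Matrix (Σ i, Fin (L i)) (Σ i, Fin (L i)) ℝ, R.PosDef →
      R * R = Matrix.blockDiagonal' S →
      ∑ i, ∑ j, ((R⁻¹ * Matrix.blockDiagonal' Snew * R⁻¹ - 1) i j) ^ 2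
        = δy ⬝ᵥ H.mulVec δy := by
  intro R hRpd hRR
  classical
  have hRdet : IsUnit R.det := hRpd.det_pos.ne'.isUnit
  have hRl : R⁻¹ * R = 1 := nonsing_inv_mul R hRdet
  have hRr : R * R⁻¹ = 1 := mul_nonsing_inv R hRdet
  have hSdet : ∀ i, IsUnit (S i).det := fun i => (hSpd i).det_pos.ne'.isUnit
  -- difference of blocks
  have hd : ∀ i, Snew i - S i = (P i)ᵀ * Matrix.diagonal (f i * (snew - s)) * P i := by
    intro i
    have hdg : Matrix.diagonal (f i * snew) - Matrix.diagonal (f i * s)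
        = Matrix.diagonal (f i * (snew - s)) := by
      rw [Matrix.diagonal_sub]
      exact congrArg Matrix.diagonal
        (funext fun u => (mul_sub (f i u) (snew u) (s u)).symm)
    rw [hS, hSnew, ← Matrix.sub_mul, ← Matrix.mul_sub, hdg]
  have hw : snew - s = -(Aᵀ.mulVec δy) := by
    rw [hs, hsnew, Matrix.mulVec_add]
    abel
  set Δ := Matrix.blockDiagonal' (fun i => Snew i - S i) with hΔ
  set T := Matrix.blockDiagonal' (fun i => (S i)⁻¹) with hTd
  set X := R⁻¹ * Matrix.blockDiagonal' Snew * R⁻¹ - 1 with hXd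
  have hΔ2 : Δ = Matrix.blockDiagonal' Snew - Matrix.blockDiagonal' S := by
    rw [hΔ]; exact blockDiagonal'_sub Snew S
  have hXeq : X = R⁻¹ * Δ * R⁻¹ := by
    rw [hXd, hΔ2, Matrix.mul_sub, Matrix.sub_mul]
    congr 1
    rw [← hRR]
    simp only [Matrix.mul_assoc]
    rw [hRr, Matrix.mul_one, hRl]
  -- symmetry facts
  have hRT : Rᵀ = R := by rw [← conjTranspose_eq_transpose_of_trivial]; exact hRpd.1
  have hRinvT : R⁻¹ᵀ = R⁻¹ := by rw [transpose_nonsing_inv, hRT]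
  have hSiT : ∀ i, (S i)ᵀ = S i := by
    intro i; rw [hS i]; simp [Matrix.transpose_mul, Matrix.mul_assoc]
  have hΔT : Δᵀ = Δ := by
    rw [hΔ, blockDiagonal'_transpose]
    exact congrArg _ (funext fun i => by
      rw [hd i]; simp [Matrix.transpose_mul, Matrix.mul_assoc])
  have hXT : Xᵀ = X := by
    rw [hXeq]
    simp only [Matrix.transpose_mul, hRinvT, hΔT, Matrix.mul_assoc]
  have hMT : ∀ i, (M i)ᵀ = M i := by
    intro i
    rw [hM i]
    simp [Matrix.transpose_mul, Matrix.transpose_nonsing_inv, hSiT, Matrix.mul_assoc]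
  -- sum of squares = trace (X * X)
  have hsum : ∑ i, ∑ j, (X i j) ^ 2 = Matrix.trace (X * X) := by
    have : Matrix.trace (Xᵀ * X) = ∑ i, ∑ j, (X i j) ^ 2 := by
      simp only [Matrix.trace, Matrix.diag_apply, Matrix.mul_apply, Matrix.transpose_apply, sq]
      rw [Finset.sum_comm]
    rw [← this, hXT]
  -- R⁻¹ * R⁻¹ = T
  have hT : R⁻¹ * R⁻¹ = T := by
    have h1 : Matrix.blockDiagonal' S * T = 1 := by
      rw [hTd, ← blockDiagonal'_mul, ← blockDiagonal'_one]
      exact congrArg _ (funext fun i => mul_nonsing_inv _ (hSdet i))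
    calc R⁻¹ * R⁻¹ = R⁻¹ * R⁻¹ * (Matrix.blockDiagonal' S * T) := by
            rw [h1, Matrix.mul_one]
      _ = R⁻¹ * (R⁻¹ * (R * (R * T))) := by rw [← hRR]; simp only [Matrix.mul_assoc]
      _ = T := by rw [← Matrix.mul_assoc R⁻¹ R, hRl, Matrix.one_mul, ← Matrix.mul_assoc, hRl,
            Matrix.one_mul]
  -- trace manipulation
  have e1 : X * X = R⁻¹ * (Δ * (T * (Δ * R⁻¹))) := by
    rw [hXeq, ← hT]
    simp only [Matrix.mul_assoc]
  have htr : Matrix.trace (X * X) = Matrix.trace (Δ * T * (Δ * T)) := by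
    rw [e1, Matrix.trace_mul_comm]
    rw [← hT]
    simp only [Matrix.mul_assoc]
  have hblock : Δ * T * (Δ * T)
      = Matrix.blockDiagonal' (fun i => (Snew i - S i) * (S i)⁻¹ * ((Snew i - S i) * (S i)⁻¹)) := by
    rw [hΔ, hTd]
    simp only [← blockDiagonal'_mul]
  -- assemble LHS
  rw [hsum, htr, hblock, Matrix.trace_blockDiagonal', hH]
  -- split RHS sum
  have hrhs : δy ⬝ᵥ (∑ i, A * (Matrix.vecMulVec (f i) (f i) ⊙ (M i ⊙ M i)) * Aᵀ).mulVec δy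
      = ∑ i, δy ⬝ᵥ (A * (Matrix.vecMulVec (f i) (f i) ⊙ (M i ⊙ M i)) * Aᵀ).mulVec δy := by
    let φ : Matrix (Fin m) (Fin m) ℝ →+ ℝ :=
      { toFun := fun B => δy ⬝ᵥ B.mulVec δy
        map_zero' := by simp
        map_add' := fun B C => by simp [Matrix.add_mulVec, dotProduct_add] }
    exact map_sum φ _ Finset.univ
  rw [hrhs]
  refine Finset.sum_congr rfl fun i _ => ?_
  have hMsym : ∀ u v, M i u v = M i v u := fun u v => by
    conv_lhs => rw [← hMT i, Matrix.transpose_apply]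
  have e2 : (Snew i - S i) * (S i)⁻¹ * ((Snew i - S i) * (S i)⁻¹)
      = (P i)ᵀ * (Matrix.diagonal (f i * (snew - s)) * (P i * ((S i)⁻¹ *
          ((P i)ᵀ * (Matrix.diagonal (f i * (snew - s)) * (P i * (S i)⁻¹)))))) := by
    rw [hd i]; simp only [Matrix.mul_assoc]
  rw [e2, Matrix.trace_mul_comm]
  have e3 : Matrix.diagonal (f i * (snew - s)) * (P i * ((S i)⁻¹ *
        ((P i)ᵀ * (Matrix.diagonal (f i * (snew - s)) * (P i * (S i)⁻¹))))) * (P i)ᵀ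
      = Matrix.diagonal (f i * (snew - s)) * M i
        * (Matrix.diagonal (f i * (snew - s)) * M i) := by
    rw [hM i]; simp only [Matrix.mul_assoc]
  rw [e3]
  rw [← Matrix.mulVec_mulVec, ← Matrix.mulVec_mulVec, Matrix.dotProduct_mulVec,
    ← Matrix.mulVec_transpose, hw]
  set w := Aᵀ.mulVec δy with hwdef
  simp only [Matrix.trace, Matrix.diag_apply, Matrix.mul_apply, Matrix.diagonal_apply,
    dotProduct, Matrix.mulVec, Matrix.hadamard_apply, Matrix.vecMulVec_apply,
    Pi.mul_apply, Pi.neg_apply, ite_mul, zero_mul, Finset.sum_ite_eq, Finset.mem_univ,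
    if_true, Finset.mul_sum]
  refine Finset.sum_congr rfl fun u _ => ?_
  refine Finset.sum_congr rfl fun v _ => ?_
  rw [hMsym v u]
  ring
end

section
/- Let P ∈ ℝ^{U×L} and let s, ŝ ∈ ℝ^{U}. If S := Pᵀdiag(s)P is positive definite and Pᵀdiag(ŝ)P is positive semidefinite, then ⟨diag(P S⁻¹ Pᵀ), ŝ⟩ ≥ 0, where diag(P S⁻¹ Pᵀ) ∈ ℝ^{U} denotes the vector of diagonal entries of P S⁻¹ Pᵀ and ⟨·,·⟩ the standard inner product on ℝ^{U}. -/
open Matrix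

namespace Matrix

open scoped ComplexOrder MatrixOrder

/-- Writing `B = Cᴴ * C`, the trace of `A * B` is the trace of the positive semidefinite
matrix `C * A * Cᴴ`. -/
lemma PosSemidef.trace_mul_nonneg {𝕜 n : Type*} [RCLike 𝕜] [Fintype n] {A B : Matrix n n 𝕜}
    (hA : A.PosSemidef) (hB : B.PosSemidef) : 0 ≤ (A * B).trace := by
  classical
  obtain ⟨C, rfl⟩ := CStarAlgebra.nonneg_iff_eq_star_mul_self.mp hB.nonneg
  rw [star_eq_conjTranspose, ← mul_assoc, trace_mul_comm]
  simpa only [mul_assoc] using (hA.mul_mul_conjTranspose_same C).trace_nonneg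

lemma diag_dotProduct {R n : Type*} [CommSemiring R] [Fintype n] [DecidableEq n]
    (M : Matrix n n R) (v : n → R) : diag M ⬝ᵥ v = (M * diagonal v).trace := by
  simp only [dotProduct, trace, diag_apply, mul_diagonal]

lemma trace_mul_mul_transpose_mul_diagonal {R m n : Type*} [CommSemiring R] [Fintype m]
    [Fintype n] [DecidableEq m] (P : Matrix m n R) (X : Matrix n n R) (v : m → R) :
    (P * X * Pᵀ * diagonal v).trace = (Pᵀ * diagonal v * P * X).trace := by
  rw [Matrix.mul_assoc, trace_mul_comm]
  simp only [Matrix.mul_assoc]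

end Matrix

theorem stmt_8 {U L : ℕ} (P : Matrix (Fin U) (Fin L) ℝ) (s shat : Fin U → ℝ)
    (hS : (Pᵀ * Matrix.diagonal s * P).PosDef)
    (hShat : (Pᵀ * Matrix.diagonal shat * P).PosSemidef) :
    0 ≤ Matrix.diag (P * (Pᵀ * Matrix.diagonal s * P)⁻¹ * Pᵀ) ⬝ᵥ shat := by
  rw [diag_dotProduct, trace_mul_mul_transpose_mul_diagonal]
  exact hShat.trace_mul_nonneg hS.posSemidef.inv
end

section
/- Let H ∈ ℝ^{m×m} be positive definite, let b, g ∈ ℝᵐ, let ν ≥ 1, let 0 < ε_N ≤ 0.05, and let η₁ > 0 and η₂ = η₁·(1 + ε_N/(20√ν)). If ‖H⁻¹(−η₁b + g)‖_H ≤ ε_N and ‖H⁻¹g‖_H ≤ √ν, then ‖H⁻¹(−η₂b + g)‖_H ≤ 1.1·ε_N. -/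
open Matrix

/-- The local norm `‖x‖_H = √(xᵀ H x)`. -/
noncomputable def normH {m : ℕ} (H : Matrix (Fin m) (Fin m) ℝ) (x : Fin m → ℝ) : ℝ :=
  Real.sqrt (x ⬝ᵥ H.mulVec x)

/-!
With `δ = ε_N / (20√ν)` the penalized gradient splits as `−η₂ b + g = (1 + δ)(−η₁ b + g) − δ g`.
Since `‖·‖_H` is the seminorm of the inner product `xᵀ H y`, the triangle inequality bounds the
new Newton step by `(1 + δ) ε_N + δ √ν = (1 + δ) ε_N + ε_N / 20 ≤ 1.1 ε_N`.
-/

section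

variable {m : ℕ} {H : Matrix (Fin m) (Fin m) ℝ}

theorem normH_eq_norm (hH : H.PosSemidef) (x : Fin m → ℝ) :
    normH H x = @norm _ (H.toSeminormedAddCommGroup hH).toNorm x := by
  rw [@norm_eq_sqrt_re_inner ℝ _ _ (H.toSeminormedAddCommGroup hH) (H.toInnerProductSpace hH),
    normH, dotProduct_comm]
  rfl

theorem normH_sub_le (hH : H.PosSemidef) (x y : Fin m → ℝ) :
    normH H (x - y) ≤ normH H x + normH H y := by
  simpa only [normH_eq_norm hH] using
    @norm_sub_le _ (H.toSeminormedAddCommGroup hH).toSeminormedAddGroup x y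

theorem normH_smul (c : ℝ) (x : Fin m → ℝ) : normH H (c • x) = |c| * normH H x := by
  rw [normH, normH, mulVec_smul, smul_dotProduct, dotProduct_smul, smul_eq_mul, smul_eq_mul,
    ← mul_assoc, ← sq, Real.sqrt_mul (sq_nonneg c), Real.sqrt_sq_eq_abs]

theorem normH_mulVec_rescale_le (hH : H.PosSemidef) (A : Matrix (Fin m) (Fin m) ℝ)
    (b g : Fin m → ℝ) (η : ℝ) {δ : ℝ} (hδ : 0 ≤ δ) :
    normH H (A *ᵥ ((-(η * (1 + δ))) • b + g)) ≤
      (1 + δ) * normH H (A *ᵥ ((-η) • b + g)) + δ * normH H (A *ᵥ g) := by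
  have hsplit : A *ᵥ ((-(η * (1 + δ))) • b + g) = (1 + δ) • A *ᵥ ((-η) • b + g) - δ • A *ᵥ g := by
    rw [← mulVec_smul, ← mulVec_smul, ← mulVec_sub]
    congr 1
    module
  calc normH H (A *ᵥ ((-(η * (1 + δ))) • b + g))
      ≤ normH H ((1 + δ) • A *ᵥ ((-η) • b + g)) + normH H (δ • A *ᵥ g) :=
        hsplit ▸ normH_sub_le hH _ _
    _ = (1 + δ) * normH H (A *ᵥ ((-η) • b + g)) + δ * normH H (A *ᵥ g) := by
        rw [normH_smul, normH_smul, abs_of_nonneg (by linarith), abs_of_nonneg hδ]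

end

theorem stmt_11_general {m : ℕ} (H : Matrix (Fin m) (Fin m) ℝ) (hH : H.PosDef)
    (b g : Fin m → ℝ) (ν εN η₁ η₂ : ℝ)
    (hν : 1 ≤ ν) (hεN0 : 0 < εN) (hεN : εN ≤ 0.05)
    (hη₂ : η₂ = η₁ * (1 + εN / (20 * Real.sqrt ν)))
    (h1 : normH H (H⁻¹.mulVec ((-η₁) • b + g)) ≤ εN)
    (h2 : normH H (H⁻¹.mulVec g) ≤ Real.sqrt ν) :
    normH H (H⁻¹.mulVec ((-η₂) • b + g)) ≤ 1.1 * εN := by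
  subst hη₂
  set δ := εN / (20 * √ν)
  have hsqrt : 1 ≤ √ν := Real.one_le_sqrt.mpr hν
  have hδ : 0 ≤ δ := by positivity
  have hδ_mul_sqrt : δ * √ν = εN / 20 := by unfold δ; field_simp
  have hδ_le : δ ≤ εN / 20 := div_le_div_of_nonneg_left hεN0.le (by norm_num) (by linarith)
  calc normH H (H⁻¹ *ᵥ ((-(η₁ * (1 + δ))) • b + g))
      ≤ (1 + δ) * normH H (H⁻¹ *ᵥ ((-η₁) • b + g)) + δ * normH H (H⁻¹ *ᵥ g) :=
        normH_mulVec_rescale_le hH.posSemidef _ _ _ _ hδ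
    _ ≤ (1 + δ) * εN + δ * √ν := by gcongr
    _ ≤ 1.1 * εN := by nlinarith

theorem stmt_11 {m : ℕ} (H : Matrix (Fin m) (Fin m) ℝ) (hH : H.PosDef)
    (b g : Fin m → ℝ) (ν εN η₁ η₂ : ℝ)
    (hν : 1 ≤ ν) (hεN0 : 0 < εN) (hεN : εN ≤ 0.05) (hη₁ : 0 < η₁)
    (hη₂ : η₂ = η₁ * (1 + εN / (20 * Real.sqrt ν)))
    (h1 : normH H (H⁻¹.mulVec ((-η₁) • b + g)) ≤ εN)
    (h2 : normH H (H⁻¹.mulVec g) ≤ Real.sqrt ν) :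
    normH H (H⁻¹.mulVec ((-η₂) • b + g)) ≤ 1.1 * εN :=
  stmt_11_general H hH b g ν εN η₁ η₂ hν hεN0 hεN hη₂ h1 h2
end

section
/- Let H, H̃ ∈ ℝ^{m×m} be positive definite with e^{-ε}·xᵀHx ≤ xᵀH̃x ≤ e^{ε}·xᵀHx for all x ∈ ℝᵐ, where ε > 0. Then for every g ∈ ℝᵐ, |gᵀ(H⁻¹ − H̃⁻¹ H H̃⁻¹)g| ≤ max{e^{2ε} − 1, 1 − e^{-2ε}} · gᵀH⁻¹g. -/
/-!
Write `y = H̃⁻¹ g`, so that `gᵀ H̃⁻¹ H H̃⁻¹ g = yᵀ H y` and `yᵀ H̃ y = gᵀ H̃⁻¹ g`. The spectral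
approximation compares `yᵀ H y` with `gᵀ H̃⁻¹ g` up to a factor `e^ε`; inverting the approximation
(via Cauchy–Schwarz for the form `xᵀ H y`) compares `gᵀ H̃⁻¹ g` with `gᵀ H⁻¹ g` up to another
factor `e^ε`. Hence `gᵀ H̃⁻¹ H H̃⁻¹ g` lies between `e^{-2ε}` and `e^{2ε}` times `gᵀ H⁻¹ g`.
-/

open Matrix

theorem abs_sub_le_max_sub_one_mul {a c r : ℝ} (ha : 0 ≤ a) (hlo : r⁻¹ * a ≤ c)
    (hhi : c ≤ r * a) : |a - c| ≤ max (r - 1) (1 - r⁻¹) * a := by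
  rw [abs_sub_le_iff]
  constructor
  · calc a - c ≤ (1 - r⁻¹) * a := by linarith
      _ ≤ _ := mul_le_mul_of_nonneg_right (le_max_right _ _) ha
  · calc c - a ≤ (r - 1) * a := by linarith
      _ ≤ _ := mul_le_mul_of_nonneg_right (le_max_left _ _) ha

namespace Matrix

variable {n : Type*} [Fintype n]

theorem PosSemidef.dotProduct_mulVec_sq_le {A : Matrix n n ℝ} (hA : A.PosSemidef)
    (x y : n → ℝ) : (x ⬝ᵥ A *ᵥ y) ^ 2 ≤ (x ⬝ᵥ A *ᵥ x) * (y ⬝ᵥ A *ᵥ y) := by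
  let _ := A.toSeminormedAddCommGroup hA
  let _ := A.toInnerProductSpace hA
  have h := real_inner_mul_inner_self_le x y
  change (A *ᵥ y) ⬝ᵥ star x * ((A *ᵥ y) ⬝ᵥ star x)
    ≤ (A *ᵥ x) ⬝ᵥ star x * ((A *ᵥ y) ⬝ᵥ star y) at h
  simpa only [star_trivial, dotProduct_comm _ x, dotProduct_comm _ y, sq] using h

theorem IsHermitian.dotProduct_mulVec_eq_mulVec_dotProduct {A : Matrix n n ℝ}
    (hA : A.IsHermitian) (x y : n → ℝ) : x ⬝ᵥ A *ᵥ y = (A *ᵥ x) ⬝ᵥ y := by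
  rw [dotProduct_mulVec, ← mulVec_transpose, (isHermitian_iff_isSymm.mp hA).eq, dotProduct_comm]

theorem IsHermitian.dotProduct_mul_mul_mulVec {A B : Matrix n n ℝ} (hB : B.IsHermitian)
    (g : n → ℝ) : g ⬝ᵥ (B * A * B) *ᵥ g = (B *ᵥ g) ⬝ᵥ A *ᵥ B *ᵥ g := by
  rw [← mulVec_mulVec, ← mulVec_mulVec, hB.dotProduct_mulVec_eq_mulVec_dotProduct]

variable [DecidableEq n]

theorem PosDef.mulVec_inv_mulVec {A : Matrix n n ℝ} (hA : A.PosDef) (g : n → ℝ) :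
    A *ᵥ A⁻¹ *ᵥ g = g := by
  rw [mulVec_mulVec, mul_nonsing_inv _ (isUnit_iff_ne_zero.2 hA.det_pos.ne'), one_mulVec]

theorem PosDef.dotProduct_inv_mulVec_le {A B : Matrix n n ℝ} (hA : A.PosDef)
    (hB : B.PosDef) {k : ℝ} (hAB : ∀ x, x ⬝ᵥ A *ᵥ x ≤ k * (x ⬝ᵥ B *ᵥ x)) (g : n → ℝ) :
    g ⬝ᵥ B⁻¹ *ᵥ g ≤ k * (g ⬝ᵥ A⁻¹ *ᵥ g) := by
  rcases eq_or_ne g 0 with rfl | hg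
  · simp
  set x := A⁻¹ *ᵥ g
  set y := B⁻¹ *ᵥ g
  have hAx : A *ᵥ x = g := hA.mulVec_inv_mulVec g
  have hBy : B *ᵥ y = g := hB.mulVec_inv_mulVec g
  have hgy_pos : 0 < g ⬝ᵥ y := by simpa using hB.inv.dotProduct_mulVec_pos hg
  have hgx_nonneg : 0 ≤ g ⬝ᵥ x := by simpa using hA.inv.posSemidef.dotProduct_mulVec_nonneg g
  have hxAy : x ⬝ᵥ A *ᵥ y = g ⬝ᵥ y := by
    rw [hA.isHermitian.dotProduct_mulVec_eq_mulVec_dotProduct, hAx]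
  have hxAx : x ⬝ᵥ A *ᵥ x = g ⬝ᵥ x := by rw [hAx, dotProduct_comm]
  have hyBy : y ⬝ᵥ B *ᵥ y = g ⬝ᵥ y := by rw [hBy, dotProduct_comm]
  have key : (g ⬝ᵥ y) ^ 2 ≤ (g ⬝ᵥ x) * (k * (g ⬝ᵥ y)) :=
    calc (g ⬝ᵥ y) ^ 2 = (x ⬝ᵥ A *ᵥ y) ^ 2 := by rw [hxAy]
      _ ≤ (x ⬝ᵥ A *ᵥ x) * (y ⬝ᵥ A *ᵥ y) := hA.posSemidef.dotProduct_mulVec_sq_le x y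
      _ ≤ (g ⬝ᵥ x) * (k * (g ⬝ᵥ y)) := by
        rw [hxAx, ← hyBy]
        exact mul_le_mul_of_nonneg_left (hAB y) hgx_nonneg
  nlinarith

theorem PosDef.dotProduct_inv_mul_mul_inv_mulVec_mem_Icc {A B : Matrix n n ℝ} (hA : A.PosDef)
    (hB : B.PosDef) {r : ℝ} (hr : 0 < r) (hlo : ∀ x, r⁻¹ * (x ⬝ᵥ A *ᵥ x) ≤ x ⬝ᵥ B *ᵥ x)
    (hhi : ∀ x, x ⬝ᵥ B *ᵥ x ≤ r * (x ⬝ᵥ A *ᵥ x)) (g : n → ℝ) :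
    g ⬝ᵥ (B⁻¹ * A * B⁻¹) *ᵥ g ∈
      Set.Icc ((r ^ 2)⁻¹ * (g ⬝ᵥ A⁻¹ *ᵥ g)) (r ^ 2 * (g ⬝ᵥ A⁻¹ *ᵥ g)) := by
  set y := B⁻¹ *ᵥ g
  rw [hB.inv.isHermitian.dotProduct_mul_mul_mulVec]
  have hyBy : y ⬝ᵥ B *ᵥ y = g ⬝ᵥ B⁻¹ *ᵥ g := by rw [hB.mulVec_inv_mulVec, dotProduct_comm]
  have hBinv_le : g ⬝ᵥ B⁻¹ *ᵥ g ≤ r * (g ⬝ᵥ A⁻¹ *ᵥ g) :=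
    hA.dotProduct_inv_mulVec_le hB (fun x ↦ (inv_mul_le_iff₀ hr).mp (hlo x)) g
  have hAinv_le : g ⬝ᵥ A⁻¹ *ᵥ g ≤ r * (g ⬝ᵥ B⁻¹ *ᵥ g) := hB.dotProduct_inv_mulVec_le hA hhi g
  constructor
  · calc (r ^ 2)⁻¹ * (g ⬝ᵥ A⁻¹ *ᵥ g) ≤ (r ^ 2)⁻¹ * (r * (g ⬝ᵥ B⁻¹ *ᵥ g)) := by gcongr
      _ = r⁻¹ * (y ⬝ᵥ B *ᵥ y) := by rw [hyBy]; field_simp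
      _ ≤ y ⬝ᵥ A *ᵥ y := (inv_mul_le_iff₀ hr).mpr (hhi y)
  · calc y ⬝ᵥ A *ᵥ y ≤ r * (y ⬝ᵥ B *ᵥ y) := (inv_mul_le_iff₀ hr).mp (hlo y)
      _ ≤ r * (r * (g ⬝ᵥ A⁻¹ *ᵥ g)) := by rw [hyBy]; gcongr
      _ = r ^ 2 * (g ⬝ᵥ A⁻¹ *ᵥ g) := by ring

end Matrix

theorem stmt_13_general {m : ℕ} (H Ht : Matrix (Fin m) (Fin m) ℝ)
    (hH : H.PosDef) (hHt : Ht.PosDef) (ε : ℝ)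
    (happrox : ∀ x : Fin m → ℝ,
      Real.exp (-ε) * (x ⬝ᵥ H.mulVec x) ≤ x ⬝ᵥ Ht.mulVec x ∧
      x ⬝ᵥ Ht.mulVec x ≤ Real.exp ε * (x ⬝ᵥ H.mulVec x)) :
    ∀ g : Fin m → ℝ,
      |g ⬝ᵥ (H⁻¹ - Ht⁻¹ * H * Ht⁻¹).mulVec g|
        ≤ max (Real.exp (2*ε) - 1) (1 - Real.exp (-(2*ε))) * (g ⬝ᵥ H⁻¹.mulVec g) := by
  intro g
  simp only [Real.exp_neg] at happrox ⊢
  obtain ⟨hlo, hhi⟩ := hH.dotProduct_inv_mul_mul_inv_mulVec_mem_Icc hHt (Real.exp_pos ε)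
    (fun x ↦ (happrox x).1) (fun x ↦ (happrox x).2) g
  rw [sub_mulVec, dotProduct_sub, two_mul, Real.exp_add, ← sq]
  exact abs_sub_le_max_sub_one_mul
    (by simpa using hH.inv.posSemidef.dotProduct_mulVec_nonneg g) hlo hhi

theorem stmt_13 {m : ℕ} (H Ht : Matrix (Fin m) (Fin m) ℝ)
    (hH : H.PosDef) (hHt : Ht.PosDef) (ε : ℝ) (hε : 0 < ε)
    (happrox : ∀ x : Fin m → ℝ,
      Real.exp (-ε) * (x ⬝ᵥ H.mulVec x) ≤ x ⬝ᵥ Ht.mulVec x ∧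
      x ⬝ᵥ Ht.mulVec x ≤ Real.exp ε * (x ⬝ᵥ H.mulVec x)) :
    ∀ g : Fin m → ℝ,
      |g ⬝ᵥ (H⁻¹ - Ht⁻¹ * H * Ht⁻¹).mulVec g|
        ≤ max (Real.exp (2*ε) - 1) (1 - Real.exp (-(2*ε))) * (g ⬝ᵥ H⁻¹.mulVec g) :=
  stmt_13_general H Ht hH hHt ε happrox
end

section
/- Let 1/2 < β ≤ 1, let ρ ≥ 1 be a real number, let L and t be positive integers, let C > 0, and let r₁,…,r_t ∈ {1,…,L}. Suppose that for every non-increasing sequence g : {1,…,L} → ℝ≥0 one has Σ_{i=1}^{t} r_i·g_{r_i} ≤ C·t·(Σ_{r=1}^{L} g_r²)^{1/2}. Then Σ_{i=1}^{t} min{r_i^{β}, ρ^{β}} ≤ C·t·√(2 + 1/(2β−1))·ρ^{β−1/2}. -/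
/-!
Test the hypothesis on `g x = min (x ^ β) (ρ ^ β) / x`: it is non-increasing because `β ≤ 1`, and
`x * g x = min (x ^ β) (ρ ^ β)`, so the left-hand side becomes `∑ i, r i * g (r i)`. Below `m = ⌊ρ⌋`
we have `g x ^ 2 ≤ x ^ (2β - 2)`, whose partial sums are at most `m ^ (2β - 1) / (2β - 1)` by
Bernoulli's inequality; above `m` we have `g x ^ 2 ≤ ρ ^ (2β) / x ^ 2`, whose tail sum is at most
`2 ρ ^ (2β) / (m + 1) ≤ 2 ρ ^ (2β - 1)`.
-/

open Finset Real

lemma sum_Icc_le_sum_Icc_add_sum_Ioc {M : Type*} [AddCommMonoid M] [PartialOrder M]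
    [IsOrderedAddMonoid M] {f : ℕ → M} (hf : ∀ i, 0 ≤ f i) (a m b : ℕ) :
    ∑ i ∈ Icc a b, f i ≤ ∑ i ∈ Icc a m, f i + ∑ i ∈ Ioc m b, f i := by
  have hdisj : Disjoint (Icc a m) (Ioc m b) :=
    disjoint_left.2 fun i hi hi' => by simp only [mem_Icc, mem_Ioc] at hi hi'; omega
  rw [← sum_union hdisj]
  exact sum_le_sum_of_subset_of_nonneg
    (fun i hi => by simp only [mem_union, mem_Icc, mem_Ioc] at hi ⊢; omega) fun i _ _ => hf i

namespace Real

lemma sub_one_rpow_le {x s : ℝ} (hx : 1 ≤ x) (hs0 : 0 ≤ s) (hs1 : s ≤ 1) :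
    (x - 1) ^ s ≤ x ^ s - s * x ^ (s - 1) := by
  have hx0 : 0 < x := by linarith
  have hbern : (1 + -x⁻¹) ^ s ≤ 1 + s * -x⁻¹ :=
    rpow_one_add_le_one_add_mul_self (by simpa using inv_le_one_of_one_le₀ hx) hs0 hs1
  calc (x - 1) ^ s = x ^ s * (1 + -x⁻¹) ^ s := by
        rw [← mul_rpow hx0.le (by simpa using inv_le_one_of_one_le₀ hx)]
        congr 1
        field_simp; ring
    _ ≤ x ^ s * (1 + s * -x⁻¹) := by gcongr
    _ = x ^ s - s * x ^ (s - 1) := by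
        rw [rpow_sub_one hx0.ne']
        ring

lemma sum_Icc_rpow_sub_one_le {s : ℝ} (hs0 : 0 < s) (hs1 : s ≤ 1) (n : ℕ) :
    ∑ x ∈ Icc 1 n, (x : ℝ) ^ (s - 1) ≤ n ^ s / s := by
  induction n with
  | zero => simp [zero_rpow hs0.ne']
  | succ n ih =>
    rw [sum_Icc_succ_top (by omega)]
    have := sub_one_rpow_le (x := (n + 1 : ℕ)) (by simp) hs0.le hs1
    push_cast at this ⊢
    rw [add_sub_cancel_right] at this
    rw [le_div_iff₀ hs0] at ih ⊢
    nlinarith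

end Real

-- For `x > 0` this is `min (x ^ β) (ρ ^ β) / x`.
noncomputable def capWeight (β ρ x : ℝ) : ℝ := min (x ^ (β - 1)) (ρ ^ β / x)

section capWeight

variable {β ρ x : ℝ}

lemma capWeight_nonneg (hρ : 0 ≤ ρ) (hx : 0 ≤ x) : 0 ≤ capWeight β ρ x :=
  le_min (rpow_nonneg hx _) (div_nonneg (rpow_nonneg hρ _) hx)

lemma capWeight_antitoneOn (hβ : β ≤ 1) (hρ : 0 ≤ ρ) : AntitoneOn (capWeight β ρ) (Set.Ioi 0) :=
  fun a ha _ _ hab => min_le_min (rpow_le_rpow_of_nonpos ha hab (by linarith))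
    (div_le_div_of_nonneg_left (rpow_nonneg hρ _) ha hab)

lemma mul_capWeight (hx : 0 < x) : x * capWeight β ρ x = min (x ^ β) (ρ ^ β) := by
  rw [capWeight, mul_min_of_nonneg _ _ hx.le, rpow_sub_one hx.ne', mul_div_cancel₀ _ hx.ne',
    mul_div_cancel₀ _ hx.ne']

lemma sum_capWeight_sq_le (hβ1 : 1 / 2 < β) (hβ2 : β ≤ 1) (hρ : 1 ≤ ρ) (L : ℕ) :
    ∑ x ∈ Icc 1 L, capWeight β ρ x ^ 2 ≤ (2 + 1 / (2 * β - 1)) * ρ ^ (2 * β - 1) := by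
  set s := 2 * β - 1
  have hs0 : 0 < s := by linarith
  have hρ0 : 0 < ρ := by linarith
  set m := ⌊ρ⌋₊
  have head : ∑ x ∈ Icc 1 m, capWeight β ρ x ^ 2 ≤ ρ ^ s / s := by
    calc ∑ x ∈ Icc 1 m, capWeight β ρ x ^ 2 ≤ ∑ x ∈ Icc 1 m, (x : ℝ) ^ (s - 1) := by
          refine sum_le_sum fun x hx => ?_
          have hx : (0 : ℝ) < x := by simp only [mem_Icc] at hx; exact_mod_cast hx.1
          calc capWeight β ρ x ^ 2 ≤ ((x : ℝ) ^ (β - 1)) ^ 2 :=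
                pow_le_pow_left₀ (capWeight_nonneg hρ0.le hx.le) (min_le_left _ _) 2
            _ = (x : ℝ) ^ (s - 1) := by rw [sq, ← rpow_add hx]; congr 1; ring
      _ ≤ m ^ s / s := sum_Icc_rpow_sub_one_le hs0 (by linarith) m
      _ ≤ ρ ^ s / s := by gcongr; exact Nat.floor_le hρ0.le
  have tail : ∑ x ∈ Ioc m L, capWeight β ρ x ^ 2 ≤ 2 * ρ ^ s := by
    calc ∑ x ∈ Ioc m L, capWeight β ρ x ^ 2
        ≤ ∑ x ∈ Ioc m L, ρ ^ (2 * β) * ((x : ℝ) ^ 2)⁻¹ := by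
          refine sum_le_sum fun x hx => ?_
          have hx : (0 : ℝ) < x := by
            simp only [mem_Ioc] at hx; exact_mod_cast (Nat.zero_le _).trans_lt hx.1
          calc capWeight β ρ x ^ 2 ≤ (ρ ^ β / x) ^ 2 :=
                pow_le_pow_left₀ (capWeight_nonneg hρ0.le hx.le) (min_le_right _ _) 2
            _ = ρ ^ (2 * β) * ((x : ℝ) ^ 2)⁻¹ := by
                rw [div_pow, ← rpow_natCast, ← rpow_mul hρ0.le]; push_cast; ring_nf
      _ ≤ ρ ^ (2 * β) * (2 / (m + 1)) := by
          rw [← mul_sum, ← Ioo_add_one_right_eq_Ioc]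
          gcongr
          exact sum_Ioo_inv_sq_le m (L + 1)
      _ = 2 * ρ ^ s * (ρ / (m + 1)) := by
          rw [show 2 * β = s + 1 by ring, rpow_add_one hρ0.ne']; ring
      _ ≤ 2 * ρ ^ s := by
          have : ρ / (m + 1) ≤ 1 := (div_le_one (by positivity)).2 (Nat.lt_floor_add_one ρ).le
          have : 0 ≤ 2 * ρ ^ s := by positivity
          nlinarith
  calc ∑ x ∈ Icc 1 L, capWeight β ρ x ^ 2
      ≤ ∑ x ∈ Icc 1 m, capWeight β ρ x ^ 2 + ∑ x ∈ Ioc m L, capWeight β ρ x ^ 2 :=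
        sum_Icc_le_sum_Icc_add_sum_Ioc (fun x => sq_nonneg _) 1 m L
    _ ≤ ρ ^ s / s + 2 * ρ ^ s := add_le_add head tail
    _ = (2 + 1 / s) * ρ ^ s := by ring

end capWeight

theorem stmt_16_general (β ρ C : ℝ) (hβ1 : 1/2 < β) (hβ2 : β ≤ 1) (hρ : 1 ≤ ρ) (hC : 0 < C)
    (L t : ℕ)
    (r : Fin t → ℕ) (hr : ∀ i, r i ∈ Finset.Icc 1 L)
    (hyp : ∀ g : ℕ → ℝ, (∀ x ∈ Finset.Icc 1 L, 0 ≤ g x) →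
      (∀ a b : ℕ, 1 ≤ a → a ≤ b → b ≤ L → g b ≤ g a) →
      ∑ i, (r i : ℝ) * g (r i) ≤ C * t * Real.sqrt (∑ x ∈ Finset.Icc 1 L, (g x) ^ 2)) :
    ∑ i, min ((r i : ℝ) ^ β) (ρ ^ β)
      ≤ C * t * Real.sqrt (2 + 1 / (2 * β - 1)) * ρ ^ (β - 1/2) := by
  have hρ0 : 0 ≤ ρ := by linarith
  have key := hyp (fun x => capWeight β ρ x) (fun x _ => capWeight_nonneg hρ0 x.cast_nonneg)
    fun a b ha hab _ => capWeight_antitoneOn hβ2 hρ0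
      (by simp only [Set.mem_Ioi, Nat.cast_pos]; omega)
      (by simp only [Set.mem_Ioi, Nat.cast_pos]; omega) (by exact_mod_cast hab)
  have hsum : ∑ i, (r i : ℝ) * capWeight β ρ (r i) = ∑ i, min ((r i : ℝ) ^ β) (ρ ^ β) :=
    sum_congr rfl fun i _ => mul_capWeight (by have := (mem_Icc.1 (hr i)).1; positivity)
  have hsqrt : √(∑ x ∈ Icc 1 L, capWeight β ρ x ^ 2)
      ≤ √(2 + 1 / (2 * β - 1)) * ρ ^ (β - 1 / 2) := by
    calc √(∑ x ∈ Icc 1 L, capWeight β ρ x ^ 2)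
        ≤ √((2 + 1 / (2 * β - 1)) * ρ ^ (2 * β - 1)) :=
          sqrt_le_sqrt (sum_capWeight_sq_le hβ1 hβ2 hρ L)
      _ = √(2 + 1 / (2 * β - 1)) * ρ ^ (β - 1 / 2) := by
          rw [sqrt_mul' _ (by positivity), sqrt_eq_rpow (ρ ^ _), ← rpow_mul hρ0]
          ring_nf
  calc ∑ i, min ((r i : ℝ) ^ β) (ρ ^ β)
      ≤ C * t * √(∑ x ∈ Icc 1 L, capWeight β ρ x ^ 2) := hsum ▸ key
    _ ≤ C * t * (√(2 + 1 / (2 * β - 1)) * ρ ^ (β - 1 / 2)) := by gcongr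
    _ = C * t * √(2 + 1 / (2 * β - 1)) * ρ ^ (β - 1 / 2) := by ring

theorem stmt_16 (β ρ C : ℝ) (hβ1 : 1/2 < β) (hβ2 : β ≤ 1) (hρ : 1 ≤ ρ) (hC : 0 < C)
    (L t : ℕ) (hL : 0 < L) (ht : 0 < t)
    (r : Fin t → ℕ) (hr : ∀ i, r i ∈ Finset.Icc 1 L)
    (hyp : ∀ g : ℕ → ℝ, (∀ x ∈ Finset.Icc 1 L, 0 ≤ g x) →
      (∀ a b : ℕ, 1 ≤ a → a ≤ b → b ≤ L → g b ≤ g a) →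
      ∑ i, (r i : ℝ) * g (r i) ≤ C * t * Real.sqrt (∑ x ∈ Finset.Icc 1 L, (g x) ^ 2)) :
    ∑ i, min ((r i : ℝ) ^ β) (ρ ^ β)
      ≤ C * t * Real.sqrt (2 + 1 / (2 * β - 1)) * ρ ^ (β - 1/2) :=
  stmt_16_general β ρ C hβ1 hβ2 hρ hC L t r hr hyp
end
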